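/- arXiv:1302.0745 — 2 statements merged into one kernel-verified Lean document; each statement's English description precedes it below -/
import Mathlib

section
/- Let R be a finite set of vectors in ℝ^n containing at least one nonzero vector, and suppose there exists v ∈ ℝ^n such that v · r > 0 for all r ∈ R. Then there exist a vector u ∈ ℝ^n and a vector r_⊥ ∈ R such that u · r_⊥ = 0 and for every r ∈ R, either u · r > 0 or r = p · r_⊥ for some real p > 0. -/
/-!
Pick a functional `w` that vanishes on none of the nonzero vectors `v r' • r - v r • r'`
(`r, r' ∈ R`); it exists because a vector space over an infinite field is not a finite union of
proper subspaces. Let `rp` minimise `w r / v r` over `R` and put `u := v rp • w - w rp • v`.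
Then `u rp = 0` and `u r = w (v rp • r - v r • rp) ≥ 0` by minimality, with equality only when
`v rp • r = v r • rp`, i.e. when `r` is a positive multiple of `rp`.
-/

open Module

theorem Module.Dual.exists_forall_apply_ne_zero {K E : Type*} [Field K] [Infinite K]
    [AddCommGroup E] [Module K E] (C : Finset E) (hC : ∀ c ∈ C, c ≠ 0) :
    ∃ w : Dual K E, ∀ c ∈ C, w c ≠ 0 := by
  by_contra! h
  have hcover : ⋃ c : C, (LinearMap.ker (Dual.eval K E c) : Set (Dual K E)) = Set.univ :=
    Set.eq_univ_of_forall fun w ↦ by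
      obtain ⟨c, hc, hwc⟩ := h w
      exact Set.mem_iUnion.mpr ⟨⟨c, hc⟩, hwc⟩
  obtain ⟨⟨c, hc⟩, htop⟩ := Subspace.exists_eq_top_of_iUnion_eq_univ hcover
  refine hC c hc ((forall_dual_apply_eq_zero_iff K c).mp fun w ↦ ?_)
  exact LinearMap.mem_ker.mp (htop ▸ Submodule.mem_top : w ∈ LinearMap.ker (Dual.eval K E c))

theorem Module.Dual.exists_apply_eq_zero_and_pos_or_eq_smul {K E : Type*} [Field K]
    [LinearOrder K] [IsStrictOrderedRing K] [AddCommGroup E] [Module K E] {R : Finset E}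
    (hR : R.Nonempty) {v : Dual K E} (hv : ∀ r ∈ R, 0 < v r) :
    ∃ u : Dual K E, ∃ rp ∈ R, u rp = 0 ∧
      ∀ r ∈ R, 0 < u r ∨ ∃ p : K, 0 < p ∧ r = p • rp := by
  classical
  obtain ⟨w, hw⟩ := exists_forall_apply_ne_zero (K := K)
    (((R ×ˢ R).image fun q ↦ v q.2 • q.1 - v q.1 • q.2).filter (· ≠ 0))
    fun _ hc ↦ (Finset.mem_filter.mp hc).2
  obtain ⟨rp, hrp, hmin⟩ := R.exists_min_image (fun r ↦ w r / v r) hR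
  refine ⟨v rp • w - w rp • v, rp, hrp, by simp [mul_comm], fun r hr ↦ ?_⟩
  have hu : (v rp • w - w rp • v) r = w (v rp • r - v r • rp) := by simp [mul_comm]
  have hnonneg : 0 ≤ w (v rp • r - v r • rp) := by
    have := (div_le_div_iff₀ (hv rp hrp) (hv r hr)).mp (hmin r hr)
    simp only [map_sub, map_smul, smul_eq_mul]
    linarith
  rcases hnonneg.lt_or_eq with hpos | hzero
  · exact Or.inl (hu ▸ hpos)
  · have hdiff : v rp • r - v r • rp = 0 := by
      by_contra hne
      refine hw _ (Finset.mem_filter.mpr ⟨?_, hne⟩) hzero.symm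
      exact Finset.mem_image.mpr ⟨(r, rp), Finset.mem_product.mpr ⟨hr, hrp⟩, rfl⟩
    refine Or.inr ⟨v r / v rp, div_pos (hv r hr) (hv rp hrp), ?_⟩
    rw [div_eq_inv_mul, mul_smul, eq_inv_smul_iff₀ (hv rp hrp).ne']
    exact sub_eq_zero.mp hdiff

theorem stmt_2 (n : ℕ) (R : Finset (Fin n → ℝ))
    (hnz : ∃ r ∈ R, r ≠ (0 : Fin n → ℝ))
    (hv : ∃ v : Fin n → ℝ, ∀ r ∈ R, 0 < ∑ i, v i * r i) :
    ∃ (u : Fin n → ℝ) (rp : Fin n → ℝ), rp ∈ R ∧ (∑ i, u i * rp i) = 0 ∧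
      ∀ r ∈ R, (0 < ∑ i, u i * r i) ∨ ∃ p : ℝ, 0 < p ∧ r = p • rp := by
  obtain ⟨r₀, hr₀, -⟩ := hnz
  obtain ⟨v, hv⟩ := hv
  obtain ⟨f, rp, hrp, hf⟩ := Dual.exists_apply_eq_zero_and_pos_or_eq_smul ⟨r₀, hr₀⟩
    (v := dotProductEquiv ℝ (Fin n) v) hv
  have hdot (r : Fin n → ℝ) : ∑ i, (dotProductEquiv ℝ (Fin n)).symm f i * r i = f r :=
    LinearMap.congr_fun ((dotProductEquiv ℝ (Fin n)).apply_symm_apply f) r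
  exact ⟨(dotProductEquiv ℝ (Fin n)).symm f, rp, hrp, by simpa only [hdot] using hf⟩
end

section
/- Let u, r_⊥ ∈ ℝ^2 with u · r_⊥ = 0, and let R ⊆ ℝ^2 be a finite set such that for every r ∈ R, u · r ≥ 0. Suppose there exists at least one r ∈ R with u · r > 0, and every r ∈ R with u · r = 0 satisfies r_⊥ · r > 0. Let τ = min { u · r : r ∈ R, u · r > 0 } and κ = min { r_⊥ · r : r ∈ R }, and set v = u + (τ / (2·(|κ|+1))) · r_⊥. Then v · r > 0 for every r ∈ R. -/
/-
Write `v ⬝ r = u ⬝ r + ε (r_⊥ ⬝ r)` with `ε = τ / (2(|κ| + 1))`. If `u ⬝ r = 0` both terms are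
nonnegative and the second is positive. Otherwise `u ⬝ r ≥ τ`, while `ε (r_⊥ ⬝ r) ≥ -ε |κ| ≥ -τ / 2`
because `|κ| < |κ| + 1`, so `v ⬝ r ≥ τ / 2 > 0`.
-/

section Perturbation

variable {𝕜 : Type*} [Field 𝕜] [LinearOrder 𝕜] [IsStrictOrderedRing 𝕜]

lemma div_two_mul_abs_add_one_mul_abs_le {τ : 𝕜} (hτ : 0 ≤ τ) (κ : 𝕜) :
    τ / (2 * (|κ| + 1)) * |κ| ≤ τ / 2 := by
  rw [div_mul_eq_mul_div, div_le_div_iff₀ (by positivity) two_pos]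
  nlinarith [abs_nonneg κ]

lemma neg_div_two_le_div_two_mul_abs_add_one_mul {τ κ b : 𝕜} (hτ : 0 ≤ τ) (hκ : κ ≤ b) :
    -(τ / 2) ≤ τ / (2 * (|κ| + 1)) * b :=
  calc -(τ / 2) ≤ -(τ / (2 * (|κ| + 1)) * |κ|) :=
        neg_le_neg (div_two_mul_abs_add_one_mul_abs_le hτ κ)
    _ = τ / (2 * (|κ| + 1)) * -|κ| := (mul_neg _ _).symm
    _ ≤ τ / (2 * (|κ| + 1)) * b :=
        mul_le_mul_of_nonneg_left ((neg_abs_le κ).trans hκ) (by positivity)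

lemma add_div_two_mul_abs_add_one_mul_pos {a b τ κ : 𝕜} (hτ : 0 < τ) (ha : 0 ≤ a)
    (hκ : κ ≤ b) (hb : a = 0 → 0 < b) (hτa : 0 < a → τ ≤ a) :
    0 < a + τ / (2 * (|κ| + 1)) * b := by
  rcases ha.eq_or_lt with rfl | ha
  · have := hb rfl
    positivity
  · linarith [hτa ha, neg_div_two_le_div_two_mul_abs_add_one_mul hτ.le hκ]

end Perturbation

theorem stmt_18 (u rp : Fin 2 → ℝ) (R : Finset (Fin 2 → ℝ))
    (hnonneg : ∀ r ∈ R, 0 ≤ ∑ i, u i * r i)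
    (hpos : (R.filter (fun r => 0 < ∑ i, u i * r i)).Nonempty)
    (hzero : ∀ r ∈ R, (∑ i, u i * r i) = 0 → 0 < ∑ i, rp i * r i) :
    let τ : ℝ := (R.filter (fun r => 0 < ∑ i, u i * r i)).inf'
      (by exact hpos) (fun r => ∑ i, u i * r i)
    let κ : ℝ := R.inf' (hpos.mono (R.filter_subset _)) (fun r => ∑ i, rp i * r i)
    let v : Fin 2 → ℝ := u + (τ / (2 * (|κ| + 1))) • rp
    ∀ r ∈ R, 0 < ∑ i, v i * r i := by
  intro τ κ v r hr
  have hτ : 0 < τ := (Finset.lt_inf'_iff _).2 fun s hs => (Finset.mem_filter.1 hs).2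
  change 0 < (u + (τ / (2 * (|κ| + 1))) • rp) ⬝ᵥ r
  rw [add_dotProduct, smul_dotProduct, smul_eq_mul]
  exact add_div_two_mul_abs_add_one_mul_pos hτ (hnonneg r hr) (R.inf'_le _ hr) (hzero r hr)
    fun h => Finset.inf'_le _ (Finset.mem_filter.2 ⟨hr, h⟩)
end
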